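/- arXiv:1801.09419 — 2 statements merged into one kernel-verified Lean document; each statement's English description precedes it below -/
import Mathlib

section
/- Let c = {c₁,…,c_k} be a set of k distinct points in E, let q be an NN quantizer with codebook c, and set M(c) = max_{i≠j} |c_i − c_j|. For every t with 0 < t < M(c)/2, every x ∈ E with d(x, 𝔉(c)) > t satisfies q(x_λ) = q(x) for λ = 2t/(M(c) − 2t), where x_λ = x + λ(x − q(x)); in other words, E \ 𝔉(c)ᵗ ⊆ A(2t/(M(c) − 2t)). -/
open MeasureTheory Metric Set ENNReal

noncomputable section

variable {E : Type*} [NormedAddCommGroup E] [InnerProductSpace ℝ E] [MeasurableSpace E]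

/-- A `k`-points nearest-neighbor quantizer: a Borel-measurable map whose image is a set of
exactly `k` points and which maps every point to a nearest point of its codebook. -/
def IsNNQuantizer (k : ℕ) (q : E → E) : Prop :=
  Measurable q ∧ (∃ s : Finset E, s.card = k ∧ Set.range q = ↑s) ∧
    ∀ x : E, ∀ c ∈ Set.range q, ‖x - q x‖ ≤ ‖x - c‖

/-- The risk (distortion) of a quantizer with respect to `P`. -/
def risk (P : Measure E) (q : E → E) : ℝ := ∫ x, ‖x - q x‖ ^ 2 ∂P

/-- An optimal `k`-points NN quantizer for `P`. -/
def IsOptimalQuantizer (P : Measure E) (k : ℕ) (q : E → E) : Prop :=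
  IsNNQuantizer k q ∧ ∀ q', IsNNQuantizer k q' → risk P q ≤ risk P q'

/-- The absolute margin condition with parameter `l0` (with respect to the optimal quantizer
`qs`):  (1) the set `A(l0)` has full `P`-measure; (2) for every random variable `Y`
(encoded by a coupling `π` of the law `P` of `X` and the law of `Y`) with
`E|X - Y|² ≤ l0² E|X - qs X|²`, the map `q ↦ E|Y - q Y|²` over `k`-points NN quantizers has a
unique minimizer (uniqueness of its codebook). -/
def AbsoluteMargin (P : Measure E) (k : ℕ) (qs : E → E) (l0 : ℝ) : Prop :=
  P {x | qs (x + l0 • (x - qs x)) = qs x} = 1 ∧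
  ∀ π : Measure (E × E), IsProbabilityMeasure π → π.map Prod.fst = P →
    (∫ p, ‖p.1 - p.2‖ ^ 2 ∂π) ≤ l0 ^ 2 * ∫ x, ‖x - qs x‖ ^ 2 ∂P →
    ∃ q0, IsNNQuantizer k q0 ∧
      (∀ q', IsNNQuantizer k q' → risk (π.map Prod.snd) q0 ≤ risk (π.map Prod.snd) q') ∧
      ∀ q', IsNNQuantizer k q' →
        (∀ q'', IsNNQuantizer k q'' → risk (π.map Prod.snd) q' ≤ risk (π.map Prod.snd) q'') →
        Set.range q' = Set.range q0

/-- Voronoi cell of the `j`-th point of the codebook `c`. -/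
def Vcell (k : ℕ) (c : Fin k → E) (j : Fin k) : Set E := {x | ∀ l, ‖x - c j‖ ≤ ‖x - c l‖}

/-- The frontier of the Voronoi diagram generated by `c`. -/
def VorFrontier (k : ℕ) (c : Fin k → E) : Set E :=
  ⋃ (i) (j) (_ : i ≠ j), Vcell k c i ∩ Vcell k c j

/-- `F₁` between two codebooks: min over permutations of the max distance of matched centers. -/
def F1 (k : ℕ) (c c' : Fin k → E) : ℝ :=
  ⨅ σ : Equiv.Perm (Fin k), ⨆ j, ‖c j - c' (σ j)‖

/-- `F₂` between two codebooks: the minimal `P`-mass of misclassified points. -/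
def F2 (P : Measure E) (k : ℕ) (c c' : Fin k → E) : ℝ :=
  ⨅ σ : Equiv.Perm (Fin k), (P (⋃ j, Vcell k c j ∩ Vcell k c' (σ j))ᶜ).toReal

/-- `max_{i ≠ j} ‖c i - c j‖`. -/
def maxDist (k : ℕ) (c : Fin k → E) : ℝ :=
  ⨆ p : {p : Fin k × Fin k // p.1 ≠ p.2}, ‖c p.1.1 - c p.1.2‖

/-- `min_{i ≠ j} ‖c i - c j‖`. -/
def minDist (k : ℕ) (c : Fin k → E) : ℝ :=
  ⨅ p : {p : Fin k × Fin k // p.1 ≠ p.2}, ‖c p.1.1 - c p.1.2‖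

/-- The function `p⋆(t)` of Definition `def:pstar`, for the optimal codebook `cs` of the
optimal quantizer `qs`. -/
def pstar (P : Measure E) (k : ℕ) (cs : Fin k → E) (qs : E → E) (t : ℝ) : ℝ :=
  (P (⋃ i, {x | minDist k cs * infDist x (frontier (Vcell k cs i)) ≤
      2 * ‖x - qs x‖ * t + 2 * t ^ 2})).toReal

/-- `F₁` between two quantizers, defined through enumerations of their codebooks. -/
def F1Q (k : ℕ) (q q' : E → E) : ℝ :=
  sInf {r | ∃ c c' : Fin k → E, Set.range c = Set.range q ∧ Set.range c' = Set.range q' ∧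
    r = ⨆ j, ‖c j - c' j‖}

/-!
Write `f_j(z) = ‖z - c_j‖² - ‖z - c_i‖²` for the Voronoi cell `V_i` containing `x`. Moving `x`
towards `c_j` by `f_j(x) / (2‖c_i - c_j‖)` reaches the bisector of `c_i, c_j`, and the segment
travelled crosses the Voronoi frontier, so `2 d(x, 𝔉) ‖c_i - c_j‖ ≤ f_j(x)`. Along the ray
`x_λ = x + λ (x - c_i)` one has `f_j(x_λ) = (1 + λ) f_j(x) - λ ‖c_i - c_j‖²`, which stays positive
as long as `λ M(c) ≤ 2t (1 + λ)` with `t < d(x, 𝔉)`; for `λ = 2t / (M(c) - 2t)` this is an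
equality.
-/

section Voronoi

variable {F : Type*} [NormedAddCommGroup F] {k : ℕ} {c : Fin k → F}

lemma isClosed_vcell (c : Fin k → F) (i : Fin k) : IsClosed (Vcell k c i) := by
  simp only [Vcell, ofPred_forall]
  exact isClosed_iInter fun l => isClosed_le (by fun_prop) (by fun_prop)

lemma exists_mem_vcell [Nonempty (Fin k)] (c : Fin k → F) (z : F) : ∃ l, z ∈ Vcell k c l :=
  Finite.exists_min fun l => ‖z - c l‖

lemma mem_vorFrontier {i j : Fin k} {z : F} (hij : i ≠ j) (hi : z ∈ Vcell k c i)
    (hj : z ∈ Vcell k c j) : z ∈ VorFrontier k c :=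
  mem_iUnion₂.mpr ⟨i, j, mem_iUnion.mpr ⟨hij, hi, hj⟩⟩

lemma norm_sub_le_maxDist (c : Fin k → F) {i j : Fin k} (hij : i ≠ j) :
    ‖c i - c j‖ ≤ maxDist k c :=
  le_ciSup (f := fun p : {p : Fin k × Fin k // p.1 ≠ p.2} => ‖c p.1.1 - c p.1.2‖)
    (Set.finite_range _).bddAbove ⟨(i, j), hij⟩

lemma IsPreconnected.inter_vorFrontier_nonempty {S : Set F} (hS : IsPreconnected S) {i : Fin k}
    {x p : F} (hx : x ∈ S ∩ Vcell k c i) (hp : p ∈ S \ Vcell k c i) :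
    (S ∩ VorFrontier k c).Nonempty := by
  have : Nonempty (Fin k) := ⟨i⟩
  set others := ⋃ (l) (_ : l ≠ i), Vcell k c l
  have hothers : IsClosed others :=
    isClosed_iUnion_of_finite fun l => isClosed_iUnion_of_finite fun _ => isClosed_vcell c l
  have hcover : S ⊆ Vcell k c i ∪ others := by
    intro z _
    obtain ⟨l, hl⟩ := exists_mem_vcell c z
    by_cases hli : l = i
    · exact Or.inl (hli ▸ hl)
    · exact Or.inr (mem_iUnion₂.mpr ⟨l, hli, hl⟩)
  obtain ⟨z, hzS, hzi, hzl⟩ := isPreconnected_closed_iff.mp hS _ _ (isClosed_vcell c i)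
    hothers hcover ⟨x, hx⟩ ⟨p, hp.1, (hcover hp.1).resolve_left hp.2⟩
  obtain ⟨l, hli, hzl⟩ := mem_iUnion₂.mp hzl
  exact ⟨z, hzS, mem_vorFrontier (Ne.symm hli) hzi hzl⟩

variable [InnerProductSpace ℝ F]

lemma infDist_vorFrontier_le_norm_sub {i j : Fin k} (hij : i ≠ j) {x p : F}
    (hx : x ∈ Vcell k c i) (hp : ‖p - c j‖ ≤ ‖p - c i‖) :
    infDist x (VorFrontier k c) ≤ ‖p - x‖ := by
  obtain ⟨z, hz, hzF⟩ : (segment ℝ x p ∩ VorFrontier k c).Nonempty := by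
    by_cases hpi : p ∈ Vcell k c i
    · exact ⟨p, right_mem_segment ℝ x p,
        mem_vorFrontier hij hpi fun l => hp.trans (hpi l)⟩
    · exact (convex_segment x p).isPreconnected.inter_vorFrontier_nonempty
        ⟨left_mem_segment ℝ x p, hx⟩ ⟨right_mem_segment ℝ x p, hpi⟩
  calc infDist x (VorFrontier k c) ≤ dist z x := by
        rw [dist_comm]; exact infDist_le_dist_of_mem hzF
    _ ≤ ‖p - x‖ := by rw [dist_eq_norm]; exact norm_sub_le_of_mem_segment hz

lemma norm_add_smul_sub_sq_sub (a b z : F) (s : ℝ) :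
    ‖z + s • (b - a) - b‖ ^ 2 - ‖z + s • (b - a) - a‖ ^ 2
      = ‖z - b‖ ^ 2 - ‖z - a‖ ^ 2 - 2 * s * ‖b - a‖ ^ 2 := by
  simp only [← real_inner_self_eq_norm_sq, inner_sub_left, inner_sub_right, inner_add_left,
    inner_add_right, real_inner_smul_left, real_inner_smul_right, real_inner_comm a z,
    real_inner_comm b z, real_inner_comm b a]
  ring

lemma norm_homothety_sub_sq_sub (a b z : F) (μ : ℝ) :
    ‖z + μ • (z - a) - b‖ ^ 2 - ‖z + μ • (z - a) - a‖ ^ 2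
      = (1 + μ) * (‖z - b‖ ^ 2 - ‖z - a‖ ^ 2) - μ * ‖a - b‖ ^ 2 := by
  simp only [← real_inner_self_eq_norm_sq, inner_sub_left, inner_sub_right, inner_add_left,
    inner_add_right, real_inner_smul_left, real_inner_smul_right, real_inner_comm a z,
    real_inner_comm b z, real_inner_comm b a]
  ring

lemma two_mul_infDist_vorFrontier_mul_le {i : Fin k} {x : F} (hx : x ∈ Vcell k c i) (j : Fin k) :
    2 * infDist x (VorFrontier k c) * ‖c i - c j‖ ≤ ‖x - c j‖ ^ 2 - ‖x - c i‖ ^ 2 := by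
  rcases eq_or_ne (c i) (c j) with hcij | hcij
  · simp [hcij]
  have hij : i ≠ j := fun h => hcij (congrArg c h)
  set d := ‖c i - c j‖
  set f := ‖x - c j‖ ^ 2 - ‖x - c i‖ ^ 2
  have hd : 0 < d := norm_pos_iff.mpr (sub_ne_zero.mpr hcij)
  have hf : 0 ≤ f := sub_nonneg.mpr (pow_le_pow_left₀ (norm_nonneg _) (hx j) 2)
  set s := f / (2 * d ^ 2)
  have hs : 0 ≤ s := by positivity
  have hsd : 2 * s * d ^ 2 = f := by simp only [s]; field_simp
  -- `x + s • (c j - c i)` lies on the bisector of `c i` and `c j`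
  have hbisector : ‖x + s • (c j - c i) - c j‖ ≤ ‖x + s • (c j - c i) - c i‖ := by
    have h := norm_add_smul_sub_sq_sub (c i) (c j) x s
    rw [norm_sub_rev (c j), hsd, sub_self, sub_eq_zero] at h
    exact ((sq_eq_sq₀ (norm_nonneg _) (norm_nonneg _)).mp h).le
  have hdist := infDist_vorFrontier_le_norm_sub hij hx hbisector
  rw [add_sub_cancel_left, norm_smul, Real.norm_of_nonneg hs, norm_sub_rev] at hdist
  calc 2 * infDist x (VorFrontier k c) * d ≤ 2 * (s * d) * d := by gcongr
    _ = f := by rw [← hsd]; ring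

lemma norm_homothety_sub_lt {i m : Fin k} {x : F} (hx : x ∈ Vcell k c i) (hcm : c m ≠ c i)
    {t μ : ℝ} (ht : t < infDist x (VorFrontier k c)) (hμ : 0 ≤ μ)
    (hμM : μ * maxDist k c ≤ 2 * t * (1 + μ)) :
    ‖x + μ • (x - c i) - c i‖ < ‖x + μ • (x - c i) - c m‖ := by
  have hd : 0 < ‖c i - c m‖ := norm_pos_iff.mpr (sub_ne_zero.mpr hcm.symm)
  have hdM := norm_sub_le_maxDist c fun h : i = m => hcm (congrArg c h).symm
  have hf := two_mul_infDist_vorFrontier_mul_le hx m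
  have hpos : 0 < ‖x + μ • (x - c i) - c m‖ ^ 2 - ‖x + μ • (x - c i) - c i‖ ^ 2 := by
    rw [norm_homothety_sub_sq_sub]
    nlinarith [mul_le_mul_of_nonneg_left hdM hμ, mul_lt_mul_of_pos_right ht hd]
  exact (pow_lt_pow_iff_left₀ (norm_nonneg _) (norm_nonneg _) two_ne_zero).mp (by linarith)

end Voronoi

lemma IsNNQuantizer.mem_vcell {F : Type*} [NormedAddCommGroup F] [MeasurableSpace F] {k : ℕ}
    {c : Fin k → F} {q : F → F} (hq : IsNNQuantizer k q) (hrange : Set.range q = Set.range c)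
    {x : F} {i : Fin k} (hi : q x = c i) : x ∈ Vcell k c i := fun l =>
  hi ▸ hq.2.2 x (c l) (hrange ▸ mem_range_self l)

theorem stmt5_general
    (k : ℕ) (c : Fin k → E)
    (q : E → E) (hq : IsNNQuantizer k q) (hrange : Set.range q = Set.range c)
    (t : ℝ) (ht : 0 < t) (htM : t < maxDist k c / 2)
    (x : E) (hx : t < infDist x (VorFrontier k c)) :
    q (x + (2 * t / (maxDist k c - 2 * t)) • (x - q x)) = q x := by
  set μ := 2 * t / (maxDist k c - 2 * t)
  have hM : 0 < maxDist k c - 2 * t := by linarith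
  have hμ : 0 ≤ μ := by positivity
  have hμM : μ * maxDist k c = 2 * t * (1 + μ) := by
    linear_combination div_mul_cancel₀ (2 * t) hM.ne'
  obtain ⟨i, hi⟩ := hrange.le (mem_range_self x)
  rw [← hi]
  obtain ⟨m, hm⟩ := hrange.le (mem_range_self (x + μ • (x - c i)))
  rw [← hm]
  by_contra hmi
  have hnearest := hq.2.2 (x + μ • (x - c i)) (c i) (hrange ▸ mem_range_self i)
  rw [← hm] at hnearest
  exact (norm_homothety_sub_lt (hq.mem_vcell hrange hi.symm) hmi hx hμ hμM.le).not_ge hnearest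

/-- points at distance more than `t` from the frontier of the Voronoi diagram keep
the same image under `q` after inflation by `λ = 2t/(M(c) - 2t)` (Remark `lem:l0`, part 1). -/
theorem stmt5 [BorelSpace E] [CompleteSpace E] [SecondCountableTopology E]
    (k : ℕ) (c : Fin k → E) (hc_inj : Function.Injective c)
    (q : E → E) (hq : IsNNQuantizer k q) (hrange : Set.range q = Set.range c)
    (t : ℝ) (ht : 0 < t) (htM : t < maxDist k c / 2)
    (x : E) (hx : t < infDist x (VorFrontier k c)) :
    q (x + (2 * t / (maxDist k c - 2 * t)) • (x - q x)) = q x :=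
  stmt5_general k c q hq hrange t ht htM x hx
end
end

section
/- Let q⋆ be an optimal k-points NN quantizer for P with codebook c⋆ = {c⋆₁,…,c⋆_k} and let q be a k-points NN quantizer with codebook c = {c₁,…,c_k}. Set m = min_{i≠j} |c⋆_i − c⋆_j|. Assume that the identity permutation attains the minimum in the definition of F₁(q⋆,q) and that F₁(q⋆,q) ≤ m. Then 𝐅(q⋆,q)² ≥ F₂(q⋆,q)·(m − F₁(q⋆,q))². -/
/-! A point `x` outside `⋃ j, V_j(c⋆) ∩ V_j(c)` lies in `V_i(c⋆) ∩ V_l(c)` for some `i ≠ l`, so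
`|q x - q⋆ x| = |c_l - c⋆_i| ≥ |c⋆_i - c⋆_l| - |c⋆_l - c_l| ≥ m - F₁ ≥ 0`. Markov's inequality for
`|q - q⋆|²` at level `(m - F₁)²` then bounds the mass of that complement, which dominates `F₂`. -/

open MeasureTheory Metric Set ENNReal

noncomputable section

variable {E : Type*} [NormedAddCommGroup E] [InnerProductSpace ℝ E] [MeasurableSpace E]

section

omit [InnerProductSpace ℝ E]

section

omit [MeasurableSpace E]

theorem minDist_le_norm_sub {k : ℕ} (c : Fin k → E) {i j : Fin k} (h : i ≠ j) :
    minDist k c ≤ ‖c i - c j‖ :=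
  ciInf_le ⟨0, by rintro _ ⟨p, rfl⟩; positivity⟩ (⟨(i, j), h⟩ : {p : Fin k × Fin k // p.1 ≠ p.2})

theorem minDist_sub_le_norm_sub {k : ℕ} {cs c : Fin k → E} {r : ℝ} {i l : Fin k}
    (hr : ‖cs l - c l‖ ≤ r) (h : i ≠ l) : minDist k cs - r ≤ ‖c l - cs i‖ := by
  have := minDist_le_norm_sub cs h
  have := norm_sub_le_norm_sub_add_norm_sub (cs i) (c l) (cs l)
  have := norm_sub_rev (cs i) (c l)
  have := norm_sub_rev (c l) (cs l)
  linarith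

end

theorem F2_le (P : Measure E) {k : ℕ} (c c' : Fin k → E) (σ : Equiv.Perm (Fin k)) :
    F2 P k c c' ≤ P.real (⋃ j, Vcell k c j ∩ Vcell k c' (σ j))ᶜ :=
  ciInf_le ⟨0, by rintro _ ⟨τ, rfl⟩; positivity⟩ σ

namespace IsNNQuantizer

variable {k : ℕ} {q : E → E}

theorem exists_eq_mem_Vcell (hq : IsNNQuantizer k q) {c : Fin k → E}
    (hc : Set.range q = Set.range c) (x : E) : ∃ i, c i = q x ∧ x ∈ Vcell k c i := by
  obtain ⟨i, hi⟩ : q x ∈ Set.range c := hc ▸ Set.mem_range_self x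
  exact ⟨i, hi, fun l => hi ▸ hq.2.2 x (c l) (hc ▸ Set.mem_range_self l)⟩

def toSimpleFunc [MeasurableSingletonClass E] (hq : IsNNQuantizer k q) : SimpleFunc E E where
  toFun := q
  measurableSet_fiber' x := hq.1 (measurableSet_singleton x)
  finite_range' := by
    obtain ⟨s, -, hs⟩ := hq.2.1
    exact hs ▸ s.finite_toSet

@[simp]
theorem coe_toSimpleFunc [MeasurableSingletonClass E] (hq : IsNNQuantizer k q) :
    ⇑hq.toSimpleFunc = q :=
  rfl

theorem integrable_norm_sub_sq [MeasurableSingletonClass E] {P : Measure E} [IsFiniteMeasure P]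
    {k' : ℕ} {q' : E → E} (hq : IsNNQuantizer k q) (hq' : IsNNQuantizer k' q') :
    Integrable (fun x => ‖q x - q' x‖ ^ 2) P := by
  simpa [Function.comp_def] using
    ((hq.toSimpleFunc - hq'.toSimpleFunc).map (‖·‖ ^ 2)).integrable_of_isFiniteMeasure

end IsNNQuantizer

theorem minDist_sub_le_norm_sub_of_notMem {k : ℕ} {qs q : E → E} {cs c : Fin k → E} {r : ℝ}
    (hqs : IsNNQuantizer k qs) (hq : IsNNQuantizer k q)
    (hcs_range : Set.range qs = Set.range cs) (hc_range : Set.range q = Set.range c)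
    (hr : ∀ j, ‖cs j - c j‖ ≤ r) {x : E} (hx : x ∉ ⋃ j, Vcell k cs j ∩ Vcell k c j) :
    minDist k cs - r ≤ ‖q x - qs x‖ := by
  obtain ⟨i, hi, hxi⟩ := hqs.exists_eq_mem_Vcell hcs_range x
  obtain ⟨l, hl, hxl⟩ := hq.exists_eq_mem_Vcell hc_range x
  have hil : i ≠ l := by
    rintro rfl
    exact hx (Set.mem_iUnion.2 ⟨i, hxi, hxl⟩)
  rw [← hi, ← hl]
  exact minDist_sub_le_norm_sub (hr l) hil

end

theorem stmt8_general [BorelSpace E]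
    (P : Measure E) [IsProbabilityMeasure P] (k : ℕ)
    (qs q : E → E) (cs c : Fin k → E)
    (hcs_range : Set.range qs = Set.range cs) (hc_range : Set.range q = Set.range c)
    (hqs : IsOptimalQuantizer P k qs) (hq : IsNNQuantizer k q)
    (hF1id : F1 k cs c = ⨆ j, ‖cs j - c j‖)
    (hF1m : F1 k cs c ≤ minDist k cs) :
    F2 P k cs c * (minDist k cs - F1 k cs c) ^ 2 ≤ ∫ x, ‖q x - qs x‖ ^ 2 ∂P := by
  set ε := (minDist k cs - F1 k cs c) ^ 2
  have hF1 : ∀ j, ‖cs j - c j‖ ≤ F1 k cs c :=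
    hF1id ▸ le_ciSup (Set.finite_range _).bddAbove
  have hcompl : (⋃ j, Vcell k cs j ∩ Vcell k c j)ᶜ ⊆ {x | ε ≤ ‖q x - qs x‖ ^ 2} := fun x hx =>
    pow_le_pow_left₀ (sub_nonneg.2 hF1m)
      (minDist_sub_le_norm_sub_of_notMem hqs.1 hq hcs_range hc_range hF1 hx) 2
  calc F2 P k cs c * ε ≤ ε * P.real {x | ε ≤ ‖q x - qs x‖ ^ 2} := by
        rw [mul_comm]
        gcongr
        exact (F2_le P cs c 1).trans (measureReal_mono hcompl)
    _ ≤ ∫ x, ‖q x - qs x‖ ^ 2 ∂P :=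
        mul_meas_ge_le_integral_of_nonneg (ae_of_all _ fun _ => by positivity)
          (hq.integrable_norm_sub_sq hqs.1) ε

/-- lower comparison of `𝐅²` with `F₂` (Subsection `sub:comp`). -/
theorem stmt8 [BorelSpace E] [CompleteSpace E] [SecondCountableTopology E]
    (P : Measure E) [IsProbabilityMeasure P] (k : ℕ) (hk : 1 ≤ k)
    (hmom : Integrable (fun x => ‖x‖ ^ 2) P)
    (hsupp : ∀ s : Finset E, s.card ≤ k → P (↑s : Set E) < 1)
    (qs q : E → E) (cs c : Fin k → E)
    (hcs_inj : Function.Injective cs) (hc_inj : Function.Injective c)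
    (hcs_range : Set.range qs = Set.range cs) (hc_range : Set.range q = Set.range c)
    (hqs : IsOptimalQuantizer P k qs) (hq : IsNNQuantizer k q)
    (hF1id : F1 k cs c = ⨆ j, ‖cs j - c j‖)
    (hF1m : F1 k cs c ≤ minDist k cs) :
    F2 P k cs c * (minDist k cs - F1 k cs c) ^ 2 ≤ ∫ x, ‖q x - qs x‖ ^ 2 ∂P :=
  stmt8_general P k qs q cs c hcs_range hc_range hqs hq hF1id hF1m
end
end
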